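/- Let T > 0, let f : ℝ^N × [0,T] → ℝ^N be continuous and continuously differentiable in its first argument, and let u : [0,T] → ℝ^N be differentiable with u̇(t) = f(u(t), t) and u(0) = u₀. Let 0 = t₀ < t₁ < … < t_M = T be a partition and let U : [0,T) → ℝ^N be a function that is continuously differentiable on each open subinterval (t_{j−1}, t_j), with finite one-sided limits U(t_{j−1}⁺) and U(t_j⁻) at the endpoints of each subinterval; set U(0⁻) := u₀ and U(T) := U(T⁻). Define the residual R(t) = U̇(t) − f(U(t), t) on the interior of each subinterval, the jumps [U]_{j−1} = U(t_{j−1}⁺) − U(t_{j−1}⁻) for j = 1, …, M, the error e = U − u, and the averaged Jacobian J(t) = ∫₀¹ D_u f(s·u(t) + (1−s)·U(t), t) ds. Suppose e(T) ≠ 0 and let φ : [0,T] → ℝ^N be differentiable with −φ̇(t) = J(t)ᵀ φ(t) and φ(T) = e(T)/‖e(T)‖. Then ‖e(T)‖ = Σ_{j=1}^{M} ⟨[U]_{j−1}, φ(t_{j−1})⟩ + Σ_{j=1}^{M} ∫_{t_{j−1}}^{t_j} ⟨R(t), φ(t)⟩ dt. -/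

import Mathlib

/-
Along each subinterval the error `e = U - u` satisfies `ė = R + J e`, because `J (U - u) = f(U) - f(u)`
is the integral form of the mean value theorem. Since `φ` solves the adjoint equation `-φ̇ = Jᵀ φ`,
the derivative of `⟨e, φ⟩` is exactly `⟨R, φ⟩`, so `∫_{I_j} ⟨R, φ⟩` is the increment of `⟨e, φ⟩`
between the one-sided limits at the ends of `I_j`. Added to the jump terms these increments telescope
to `⟨e(T), φ(T)⟩ - ⟨U(0⁻) - u(0), φ(0)⟩ = ‖e(T)‖`, the weak initial condition making the last term vanish.
-/

open MeasureTheory Set Filter Topology ContinuousLinearMap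
open scoped InnerProductSpace Interval

theorem monotoneOn_nat_Iic_of_le_succ {α : Type*} [Preorder α] {f : ℕ → α} {k : ℕ}
    (hf : ∀ n < k, f n ≤ f (n + 1)) : MonotoneOn f (Iic k) := by
  intro i _ j hj hij
  induction j, hij using Nat.le_induction with
  | base => exact le_rfl
  | succ n _ ih =>
    have hn : n < k := hj
    exact (ih hn.le).trans (hf n hn)

theorem integral_fderiv_segment_apply_sub {E F : Type*} [NormedAddCommGroup E] [NormedSpace ℝ E]
    [NormedAddCommGroup F] [NormedSpace ℝ F] [CompleteSpace F] {g : E → F} {g' : E → E →L[ℝ] F}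
    (hg : ∀ x, HasFDerivAt g (g' x) x) (hg' : Continuous g') (a b : E) :
    (∫ σ in (0 : ℝ)..1, g' (σ • a + (1 - σ) • b)) (a - b) = g a - g b := by
  have hsegment : ∀ σ : ℝ, HasDerivAt (fun σ : ℝ => σ • a + (1 - σ) • b) (a - b) σ := fun σ =>
    (((hasDerivAt_id σ).smul_const a).add (((hasDerivAt_id σ).const_sub 1).smul_const b)).congr_deriv
      (by simp [sub_eq_add_neg])
  have hcont : Continuous fun σ : ℝ => g' (σ • a + (1 - σ) • b) := hg'.comp (by fun_prop)
  rw [ContinuousLinearMap.intervalIntegral_apply (hcont.intervalIntegrable 0 1),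
    intervalIntegral.integral_eq_sub_of_hasDerivAt
      (fun σ _ => (hg _).comp_hasDerivAt σ (hsegment σ))
      ((hcont.clm_apply continuous_const).intervalIntegrable 0 1)]
  simp

section InnerProductSpace

variable {E : Type*} [NormedAddCommGroup E] [InnerProductSpace ℝ E]

theorem IntervalIntegrable.inner_continuousOn {a b : ℝ} {r φ : ℝ → E}
    (hr : IntervalIntegrable r volume a b) (hφ : ContinuousOn φ (uIcc a b)) :
    IntervalIntegrable (fun s => ⟪r s, φ s⟫_ℝ) volume a b := by
  rw [intervalIntegrable_iff] at hr ⊢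
  obtain ⟨C, hC⟩ := isCompact_uIcc.exists_bound_of_continuousOn hφ
  have hφm : AEStronglyMeasurable φ (volume.restrict (Ι a b)) :=
    (hφ.mono uIoc_subset_uIcc).aestronglyMeasurable measurableSet_uIoc
  refine Integrable.mono' (hr.norm.const_mul C) (hr.aestronglyMeasurable.inner hφm) ?_
  filter_upwards [ae_restrict_mem measurableSet_uIoc] with s hs
  calc ‖⟪r s, φ s⟫_ℝ‖ ≤ ‖r s‖ * ‖φ s‖ := norm_inner_le_norm _ _
    _ ≤ ‖r s‖ * C := by gcongr; exact hC s (uIoc_subset_uIcc hs)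
    _ = C * ‖r s‖ := mul_comm _ _

theorem real_inner_inv_norm_smul_self (x : E) : ⟪x, ‖x‖⁻¹ • x⟫_ℝ = ‖x‖ := by
  rw [real_inner_smul_right, real_inner_self_eq_norm_mul_norm, ← div_eq_inv_mul, mul_self_div_self]

theorem sum_inner_sub_add_sum_eq_of_increment {M : ℕ} {x y v p : ℕ → E} {I : ℕ → ℝ}
    (hI : ∀ j < M, I j = ⟪y (j + 1) - v (j + 1), p (j + 1)⟫_ℝ - ⟪x j - v j, p j⟫_ℝ) :
    ∑ j ∈ Finset.range M, ⟪x j - y j, p j⟫_ℝ + ∑ j ∈ Finset.range M, I j =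
      ⟪y M - v M, p M⟫_ℝ - ⟪y 0 - v 0, p 0⟫_ℝ := by
  rw [← Finset.sum_add_distrib, ← Finset.sum_range_sub (fun j => ⟪y j - v j, p j⟫_ℝ)]
  refine Finset.sum_congr rfl fun j hj => ?_
  rw [hI j (Finset.mem_range.1 hj), ← sub_sub_sub_cancel_right (x j) (y j) (v j), inner_sub_left]
  ring

variable [CompleteSpace E]

theorem HasDerivAt.inner_of_hasDerivAt_adjoint {e φ : ℝ → E} {e' : E} {A : E →L[ℝ] E} {s : ℝ}
    (he : HasDerivAt e e' s) (hφ : HasDerivAt φ (-(adjoint A) (φ s)) s) :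
    HasDerivAt (fun s => ⟪e s, φ s⟫_ℝ) ⟪e' - A (e s), φ s⟫_ℝ s := by
  refine (he.inner ℝ hφ).congr_deriv ?_
  rw [inner_neg_right, adjoint_inner_right, inner_sub_left]
  ring

theorem integral_inner_eq_sub_of_hasDerivAt_adjoint {a b : ℝ} (hab : a < b) {e φ r : ℝ → E}
    {A : ℝ → E →L[ℝ] E} {ea eb : E}
    (he : ∀ s ∈ Ioo a b, HasDerivAt e (r s + A s (e s)) s)
    (hφ : ∀ s ∈ Ioo a b, HasDerivAt φ (-(adjoint (A s)) (φ s)) s)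
    (hφc : ContinuousOn φ (Icc a b)) (hr : IntervalIntegrable r volume a b)
    (hea : Tendsto e (𝓝[>] a) (𝓝 ea)) (heb : Tendsto e (𝓝[<] b) (𝓝 eb)) :
    ∫ s in a..b, ⟪r s, φ s⟫_ℝ = ⟪eb, φ b⟫_ℝ - ⟪ea, φ a⟫_ℝ := by
  have hφa : Tendsto φ (𝓝[>] a) (𝓝 (φ a)) :=
    ((hφc a (left_mem_Icc.2 hab.le)).mono_of_mem_nhdsWithin (Icc_mem_nhdsGT hab)).tendsto
  have hφb : Tendsto φ (𝓝[<] b) (𝓝 (φ b)) :=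
    ((hφc b (right_mem_Icc.2 hab.le)).mono_of_mem_nhdsWithin (Icc_mem_nhdsLT hab)).tendsto
  refine intervalIntegral.integral_eq_sub_of_hasDerivAt_of_tendsto hab
    (fun s hs => ?_) (hr.inner_continuousOn (by rwa [uIcc_of_le hab.le]))
    (hea.inner hφa) (heb.inner hφb)
  simpa using (he s hs).inner_of_hasDerivAt_adjoint (hφ s hs)

end InnerProductSpace

theorem stmt9_general (N M : ℕ) (T : ℝ)
    (f : EuclideanSpace ℝ (Fin N) → ℝ → EuclideanSpace ℝ (Fin N))
    (Df : EuclideanSpace ℝ (Fin N) → ℝ →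
      (EuclideanSpace ℝ (Fin N) →L[ℝ] EuclideanSpace ℝ (Fin N)))
    (hDf : ∀ x t, HasFDerivAt (fun y => f y t) (Df x t) x)
    (hDf_cont : Continuous fun p : EuclideanSpace ℝ (Fin N) × ℝ => Df p.1 p.2)
    (u₀ : EuclideanSpace ℝ (Fin N))
    (u : ℝ → EuclideanSpace ℝ (Fin N))
    (hu : ∀ s ∈ Set.Icc (0 : ℝ) T, HasDerivAt u (f (u s) s) s)
    (hu0 : u 0 = u₀)
    (t : ℕ → ℝ) (ht0 : t 0 = 0) (htM : t M = T)
    (ht_mono : ∀ j < M, t j < t (j + 1))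
    (U : ℝ → EuclideanSpace ℝ (Fin N))
    (hU_smooth : ∀ j < M, ContDiffOn ℝ 1 U (Set.Ioo (t j) (t (j + 1))))
    (Up Um : ℕ → EuclideanSpace ℝ (Fin N))
    (hUp : ∀ j < M,
      Filter.Tendsto U (nhdsWithin (t j) (Set.Ioi (t j))) (nhds (Up j)))
    (hUm : ∀ j, 1 ≤ j → j ≤ M →
      Filter.Tendsto U (nhdsWithin (t j) (Set.Iio (t j))) (nhds (Um j)))
    (hUm0 : Um 0 = u₀)
    (hUT : U T = Um M)
    (R : ℝ → EuclideanSpace ℝ (Fin N))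
    (hR : ∀ j < M, ∀ s ∈ Set.Ioo (t j) (t (j + 1)), R s = deriv U s - f (U s) s)
    (hR_int : ∀ j < M, IntervalIntegrable R volume (t j) (t (j + 1)))
    (e : ℝ → EuclideanSpace ℝ (Fin N)) (he : e = U - u)
    (J : ℝ → (EuclideanSpace ℝ (Fin N) →L[ℝ] EuclideanSpace ℝ (Fin N)))
    (hJ : ∀ s, J s = ∫ σ in (0 : ℝ)..1, Df (σ • u s + (1 - σ) • U s) s)
    (φ : ℝ → EuclideanSpace ℝ (Fin N))
    (hφ : ∀ s ∈ Set.Icc (0 : ℝ) T,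
      HasDerivAt φ (-(ContinuousLinearMap.adjoint (J s) (φ s))) s)
    (hφT : φ T = ‖e T‖⁻¹ • e T) :
    ‖e T‖ = (∑ j ∈ Finset.range M, (inner ℝ (Up j - Um j) (φ (t j)) : ℝ)) +
      ∑ j ∈ Finset.range M, ∫ s in (t j)..(t (j + 1)), (inner ℝ (R s) (φ s) : ℝ) := by
  have ht_mem : ∀ j ≤ M, t j ∈ Icc 0 T := fun j hj =>
    have ht := monotoneOn_nat_Iic_of_le_succ fun n hn => (ht_mono n hn).le
    ⟨ht0 ▸ ht M.zero_le hj j.zero_le, htM ▸ ht hj (mem_Iic.2 le_rfl) hj⟩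
  have hJ_error : ∀ s, J s (U s - u s) = f (U s) s - f (u s) s := fun s => by
    rw [hJ, ← neg_sub, map_neg, integral_fderiv_segment_apply_sub (hDf · s)
      (hDf_cont.comp (continuous_id.prodMk continuous_const)), neg_sub]
  have hlocal : ∀ j < M, ∫ s in (t j)..(t (j + 1)), ⟪R s, φ s⟫_ℝ =
      ⟪Um (j + 1) - u (t (j + 1)), φ (t (j + 1))⟫_ℝ - ⟪Up j - u (t j), φ (t j)⟫_ℝ := by
    intro j hj
    have hI : Icc (t j) (t (j + 1)) ⊆ Icc 0 T := Icc_subset_Icc (ht_mem j hj.le).1 (ht_mem _ hj).2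
    have hu_cont : ∀ s ∈ Icc (t j) (t (j + 1)), Tendsto u (𝓝 s) (𝓝 (u s)) := fun s hs =>
      (hu s (hI hs)).continuousAt.tendsto
    refine integral_inner_eq_sub_of_hasDerivAt_adjoint (e := U - u) (ht_mono j hj) (fun s hs => ?_)
      (fun s hs => hφ s (hI (Ioo_subset_Icc_self hs)))
      (fun s hs => (hφ s (hI hs)).continuousAt.continuousWithinAt) (hR_int j hj)
      ((hUp j hj).sub ((hu_cont _ (left_mem_Icc.2 (ht_mono j hj).le)).mono_left nhdsWithin_le_nhds))
      ((hUm _ j.succ_pos hj).sub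
        ((hu_cont _ (right_mem_Icc.2 (ht_mono j hj).le)).mono_left nhdsWithin_le_nhds))
    have hU_deriv : HasDerivAt U (deriv U s) s :=
      ((hU_smooth j hj).differentiableOn one_ne_zero |>.differentiableAt
        (isOpen_Ioo.mem_nhds hs)).hasDerivAt
    refine (hU_deriv.sub (hu s (hI (Ioo_subset_Icc_self hs)))).congr_deriv ?_
    rw [hR j hj s hs, Pi.sub_apply, hJ_error]
    abel
  rw [sum_inner_sub_add_sum_eq_of_increment (v := fun j => u (t j)) hlocal]
  simp only [ht0, htM, hUm0, hu0, sub_self, inner_zero_left, sub_zero, ← hUT]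
  rw [← Pi.sub_apply, ← he, hφT, real_inner_inv_norm_smul_self]

/-- A posteriori error representation for the discontinuous
Galerkin method: with `U` piecewise smooth on the partition
`0 = t₀ < … < t_M = T`, one-sided limits `U(t_j⁺) = Up j`, `U(t_j⁻) = Um j`,
weak initial condition `U(0⁻) = u₀`, convention `U(T) = U(T⁻)`, residual
`R = U̇ − f(U,·)` on the interior of each subinterval, error `e = U − u`,
averaged Jacobian `J`, and dual solution `φ` with `−φ̇ = J*φ`,
`φ(T) = e(T)/‖e(T)‖`, one has
`‖e(T)‖ = Σ_j ([U]_{j−1}, φ(t_{j−1})) + Σ_j ∫_{I_j} (R, φ) dt`. -/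
theorem stmt9 (N M : ℕ) (hM : 1 ≤ M) (T : ℝ) (hT : 0 < T)
    (f : EuclideanSpace ℝ (Fin N) → ℝ → EuclideanSpace ℝ (Fin N))
    (hf_cont : Continuous fun p : EuclideanSpace ℝ (Fin N) × ℝ => f p.1 p.2)
    (Df : EuclideanSpace ℝ (Fin N) → ℝ →
      (EuclideanSpace ℝ (Fin N) →L[ℝ] EuclideanSpace ℝ (Fin N)))
    (hDf : ∀ x t, HasFDerivAt (fun y => f y t) (Df x t) x)
    (hDf_cont : Continuous fun p : EuclideanSpace ℝ (Fin N) × ℝ => Df p.1 p.2)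
    (u₀ : EuclideanSpace ℝ (Fin N))
    (u : ℝ → EuclideanSpace ℝ (Fin N))
    (hu : ∀ s ∈ Set.Icc (0 : ℝ) T, HasDerivAt u (f (u s) s) s)
    (hu0 : u 0 = u₀)
    (t : ℕ → ℝ) (ht0 : t 0 = 0) (htM : t M = T)
    (ht_mono : ∀ j < M, t j < t (j + 1))
    (U : ℝ → EuclideanSpace ℝ (Fin N))
    (hU_smooth : ∀ j < M, ContDiffOn ℝ 1 U (Set.Ioo (t j) (t (j + 1))))
    (Up Um : ℕ → EuclideanSpace ℝ (Fin N))
    (hUp : ∀ j < M,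
      Filter.Tendsto U (nhdsWithin (t j) (Set.Ioi (t j))) (nhds (Up j)))
    (hUm : ∀ j, 1 ≤ j → j ≤ M →
      Filter.Tendsto U (nhdsWithin (t j) (Set.Iio (t j))) (nhds (Um j)))
    (hUm0 : Um 0 = u₀)
    (hUT : U T = Um M)
    (R : ℝ → EuclideanSpace ℝ (Fin N))
    (hR : ∀ j < M, ∀ s ∈ Set.Ioo (t j) (t (j + 1)), R s = deriv U s - f (U s) s)
    (hR_int : ∀ j < M, IntervalIntegrable R volume (t j) (t (j + 1)))
    (e : ℝ → EuclideanSpace ℝ (Fin N)) (he : e = U - u)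
    (J : ℝ → (EuclideanSpace ℝ (Fin N) →L[ℝ] EuclideanSpace ℝ (Fin N)))
    (hJ : ∀ s, J s = ∫ σ in (0 : ℝ)..1, Df (σ • u s + (1 - σ) • U s) s)
    (heT : e T ≠ 0)
    (φ : ℝ → EuclideanSpace ℝ (Fin N))
    (hφ : ∀ s ∈ Set.Icc (0 : ℝ) T,
      HasDerivAt φ (-(ContinuousLinearMap.adjoint (J s) (φ s))) s)
    (hφT : φ T = ‖e T‖⁻¹ • e T) :
    ‖e T‖ = (∑ j ∈ Finset.range M, (inner ℝ (Up j - Um j) (φ (t j)) : ℝ)) +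
      ∑ j ∈ Finset.range M, ∫ s in (t j)..(t (j + 1)), (inner ℝ (R s) (φ s) : ℝ) :=
  stmt9_general N M T f Df hDf hDf_cont u₀ u hu hu0 t ht0 htM ht_mono U hU_smooth Up Um hUp hUm hUm0
    hUT R hR hR_int e he J hJ φ hφ hφT
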